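/- arXiv:1501.03880 — 2 statements merged into one kernel-verified Lean document; each statement's English description precedes it below -/
import Mathlib

section
/- For positive integers m, k, n with 1 <= m <= n-k, the binomial-Pochhammer identity holds: C(n-m-1, k-1)*C(m+k, m)*(Y)_m + C(n-m-1, k)*C(m+k, m)*(Y)_m - C(n-m, k)*C(m+k-1, m-1)*(k+m)*(Y)_{m-1} = C(n-m, k)*C(m+k, m)*(Y-1)_m. -/
/-- The rising factorial (Pochhammer symbol) `(a)_j = a(a+1)⋯(a+j-1)`. -/
def rf {R : Type} [CommRing R] (a : R) (j : ℕ) : R := ∏ i ∈ Finset.range j, (a + i)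

lemma rf_succ {R : Type} [CommRing R] (a : R) (j : ℕ) :
    rf a (j + 1) = rf a j * (a + j) := by
  simp [rf, Finset.prod_range_succ]

lemma rf_sub_one {R : Type} [CommRing R] (a : R) (j : ℕ) :
    rf (a - 1) (j + 1) = (a - 1) * rf a j := by
  have h : ∀ i ∈ Finset.range j, a - 1 + ((i + 1 : ℕ) : R) = a + i := by
    intro i _; push_cast; ring
  rw [rf, Finset.prod_range_succ', Finset.prod_congr rfl h]
  simp [rf, mul_comm]

theorem stmt1 {R : Type} [CommRing R] (Y : R) (m k n : ℕ)
    (hm : 1 ≤ m) (hk : 1 ≤ k) (hn : 1 ≤ n) (hmn : m + k ≤ n) :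
    ((n - m - 1).choose (k - 1) : R) * ((m + k).choose m : R) * rf Y m
      + ((n - m - 1).choose k : R) * ((m + k).choose m : R) * rf Y m
      - ((n - m).choose k : R) * ((m + k - 1).choose (m - 1) : R) * ((k + m : ℕ) : R)
          * rf Y (m - 1)
      = ((n - m).choose k : R) * ((m + k).choose m : R) * rf (Y - 1) m := by
  obtain ⟨m, rfl⟩ : ∃ m', m = m' + 1 := ⟨m - 1, by omega⟩
  obtain ⟨k, rfl⟩ : ∃ k', k = k' + 1 := ⟨k - 1, by omega⟩
  have hpas : (n - (m + 1)).choose (k + 1)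
      = (n - (m + 1) - 1).choose k + (n - (m + 1) - 1).choose (k + 1) := by
    have h1 : n - (m + 1) = (n - (m + 1) - 1) + 1 := by omega
    rw [h1, Nat.choose_succ_succ]
    simp
  have hcm : (k + 1 + (m + 1)) * (m + 1 + k).choose m
      = (m + 1 + k + 1).choose (m + 1) * (m + 1) := by
    have h := Nat.add_one_mul_choose_eq (m + 1 + k) m
    rw [show k + 1 + (m + 1) = m + 1 + k + 1 from by omega, h]
  have hpasR : ((n - (m + 1)).choose (k + 1) : R)
      = ((n - (m + 1) - 1).choose k : R) + ((n - (m + 1) - 1).choose (k + 1) : R) := by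
    exact_mod_cast congrArg (Nat.cast (R := R)) hpas
  have hcmR : ((k + 1 + (m + 1) : ℕ) : R) * ((m + 1 + k).choose m : R)
      = ((m + 1 + k + 1).choose (m + 1) : R) * ((m : R) + 1) := by
    exact_mod_cast congrArg (Nat.cast (R := R)) hcm
  simp only [Nat.add_sub_cancel]
  rw [show m + 1 + (k + 1) - 1 = m + 1 + k from by omega]
  rw [rf_succ, rf_sub_one]
  push_cast at hpasR hcmR ⊢
  ring_nf at hpasR hcmR ⊢
  linear_combination (-(((2 + m + k).choose (1 + m) : R) * rf Y m * ((m : R) + Y))) * hpasR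
    - (rf Y m * ((n - (1 + m)).choose (1 + k) : R)) * hcmR
end

section
/- Let mu_n(b, lambda) be the moment functional defined via weighted Motzkin paths. Given a sequence (a_k)_{k>=0} with a_0 = 0, we have mu_{2n+2}(0, a) = a_1 * mu_n(b'', lambda'') where b''_k = a_{2k+1} + a_{2k+2} and lambda''_k = a_{2k} a_{2k+1}. -/
/-- `mwalk b lam n h` is the weighted sum over Motzkin paths of length `n` from height `h`
down to height `0`: up steps have weight `1`, level steps at height `k` weight `b k`,
down steps from height `k` weight `lam k`.  The `n`-th moment is `mwalk b lam n 0`. -/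
def mwalk {R : Type} [CommRing R] (b lam : ℕ → R) : ℕ → ℕ → R
  | 0, h => if h = 0 then 1 else 0
  | n + 1, 0 => mwalk b lam n 1 + b 0 * mwalk b lam n 0
  | n + 1, h + 1 =>
      mwalk b lam n (h + 2) + b (h + 1) * mwalk b lam n (h + 1) + lam (h + 1) * mwalk b lam n h

lemma gstep {R : Type} [CommRing R] (b lam : ℕ → R) (n h : ℕ) :
    mwalk b lam (n + 1) (h + 1)
      = mwalk b lam n (h + 2) + b (h + 1) * mwalk b lam n (h + 1)
        + lam (h + 1) * mwalk b lam n h := by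
  simp only [mwalk]

lemma gstep0 {R : Type} [CommRing R] (b lam : ℕ → R) (n : ℕ) :
    mwalk b lam (n + 1) 0 = mwalk b lam n 1 + b 0 * mwalk b lam n 0 := by
  simp only [mwalk]

lemma key {R : Type} [CommRing R] (a : ℕ → R) : ∀ m h,
    mwalk (fun _ => 0) a (2 * m + 1) (2 * h + 1)
      = a 1 * mwalk (fun k => a (2 * k + 1) + a (2 * k + 2))
          (fun k => a (2 * k) * a (2 * k + 1)) m h := by
  intro m
  induction m with
  | zero =>
    intro h
    cases h with
    | zero => simp [mwalk]
    | succ h =>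
      rw [show 2 * (h + 1) + 1 = (2 * h + 2) + 1 by ring,
        gstep (fun _ => 0) a 0 (2 * h + 2)]
      simp [mwalk]
  | succ m ih =>
    intro h
    rw [show 2 * (m + 1) + 1 = (2 * m + 2) + 1 by ring]
    cases h with
    | zero =>
      rw [show 2 * 0 + 1 = 0 + 1 from rfl, gstep (fun _ => 0) a (2 * m + 2) 0,
        show (0:ℕ) + 2 = 1 + 1 from rfl, show (2 * m + 2 : ℕ) = (2 * m + 1) + 1 by ring,
        gstep (fun _ => 0) a (2 * m + 1) 1, gstep0 (fun _ => 0) a (2 * m + 1),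
        gstep0 (fun k => a (2 * k + 1) + a (2 * k + 2)) (fun k => a (2 * k) * a (2 * k + 1)) m]
      have i0 := ih 0
      have i1 := ih 1
      ring_nf at i0 i1 ⊢
      linear_combination i1 + (a 1 + a 2) * i0
    | succ h =>
      rw [show 2 * (h + 1) + 1 = (2 * h + 2) + 1 by ring,
        gstep (fun _ => 0) a (2 * m + 2) (2 * h + 2),
        show (2 * m + 2 : ℕ) = (2 * m + 1) + 1 by ring,
        show (2 * h + 2 + 2 : ℕ) = (2 * h + 3) + 1 by ring,
        gstep (fun _ => 0) a (2 * m + 1) (2 * h + 3),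
        show (2 * h + 2 : ℕ) = (2 * h + 1) + 1 by ring,
        gstep (fun _ => 0) a (2 * m + 1) (2 * h + 1),
        gstep (fun k => a (2 * k + 1) + a (2 * k + 2))
          (fun k => a (2 * k) * a (2 * k + 1)) m h]
      have i0 := ih h
      have i1 := ih (h + 1)
      have i2 := ih (h + 2)
      ring_nf at i0 i1 i2 ⊢
      linear_combination i2 + (a (4 + h * 2) + a (3 + h * 2)) * i1
        + (a (3 + h * 2) * a (2 + h * 2)) * i0

theorem stmt7 {R : Type} [CommRing R] (a : ℕ → R) (ha0 : a 0 = 0) (n : ℕ) :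
    mwalk (fun _ => 0) a (2 * n + 2) 0
      = a 1 * mwalk (fun k => a (2 * k + 1) + a (2 * k + 2))
          (fun k => a (2 * k) * a (2 * k + 1)) n 0 := by
  rw [show 2 * n + 2 = (2 * n + 1) + 1 by ring, gstep0 (fun _ => 0) a (2 * n + 1)]
  have := key a n 0
  rw [show 2 * 0 + 1 = 1 from rfl] at this
  rw [this]; ring
end
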